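/- For any d×d unitary matrix U, the vector W = (s₁, s₂−s₁, …, s_d−s_{d−1}) is majorized by the vector Q^{(d−1)} = (R₁, R₂−R₁, …, R_d−R_{d−1}), where R_i = ((1+s_i)/2)². Consequently the direct-sum majorization bound B_Maj2 is never weaker than the tensor-product majorization bound B_Maj1. -/

import Mathlib

open scoped BigOperators Matrix ComplexConjugate ComplexOrder

/-- Shannon entropy of a finite real vector (natural logarithm). -/
noncomputable def shannonEntropy {n : Type*} [Fintype n] (x : n → ℝ) : ℝ :=
  -∑ i, x i * Real.log (x i)

/-- Von Neumann entropy of a Hermitian matrix, `-∑ λᵢ ln λᵢ`. -/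
noncomputable def vonNeumannEntropy {d : ℕ} {ρ : Matrix (Fin d) (Fin d) ℂ}
    (hρ : ρ.IsHermitian) : ℝ :=
  -∑ i, hρ.eigenvalues i * Real.log (hρ.eigenvalues i)

/-- `Majorizes x y` means `x ≺ y`: the vectors have equal total sums and, for every `k`,
the sum of the `k` largest entries of `x` is at most the sum of the `k` largest entries
of `y` (formulated via subsets; the two index types may differ, which corresponds to
padding the shorter vector with zeros). -/
def Majorizes {ι κ : Type*} [Fintype ι] [Fintype κ] (x : ι → ℝ) (y : κ → ℝ) : Prop :=
  (∑ i, x i = ∑ j, y j) ∧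
  ∀ A : Finset ι, ∃ B : Finset κ, B.card ≤ A.card ∧ ∑ i ∈ A, x i ≤ ∑ j ∈ B, y j

/-- The operator norm (largest singular value) of the submatrix of `U` with rows `I`
and columns `J`, expressed as the supremum of `|⟨x, U y⟩|` over unit vectors supported
on `I` resp. `J`. -/
noncomputable def subOpNorm {d : ℕ} (U : Matrix (Fin d) (Fin d) ℂ)
    (I J : Finset (Fin d)) : ℝ :=
  sSup { r : ℝ | ∃ (x : I → ℂ) (y : J → ℂ),
    (∑ i, ‖x i‖ ^ 2 = 1) ∧ (∑ j, ‖y j‖ ^ 2 = 1) ∧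
    r = ‖∑ i : I, ∑ j : J, (starRingEnd ℂ) (x i) * U i.1 j.1 * y j‖ }

/-- `sCoef U k` is the coefficient `s_k`: the maximal operator norm of a submatrix of `U`
of class `k`, i.e. with `#rows + #cols = k + 1` (for `k = 0` the set is empty and the
supremum equals `0`). -/
noncomputable def sCoef {d : ℕ} (U : Matrix (Fin d) (Fin d) ℂ) (k : ℕ) : ℝ :=
  sSup { r : ℝ | ∃ I J : Finset (Fin d), I.Nonempty ∧ J.Nonempty ∧
    I.card + J.card = k + 1 ∧ r = subOpNorm U I J }

/-- The vector `W = (s₁, s₂ - s₁, …, s_d - s_{d-1})`. -/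
noncomputable def Wvec {d : ℕ} (U : Matrix (Fin d) (Fin d) ℂ) : Fin d → ℝ :=
  fun k => sCoef U (k.val + 1) - (if k.val = 0 then 0 else sCoef U k.val)

/-! The coefficients satisfy `0 ≤ s_k ≤ s_{k+1} ≤ 1`, `s_d = 1`, `0 < s_1`, and the increment
bound `s_{k+1} ≤ s_k + s_1`. For the latter, take a submatrix with rows `I`, columns `J`,
`#J ≤ #I`, and unit vectors `a, b` supported on `I, J`; split `⟪a, U b⟫` along a row `i` where
`|a_i|` is smallest. The remaining rows form a submatrix of class `k`, while `|a_i|² ≤ 1/#I` and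
`|(U b)_i|² ≤ s_1² #J ≤ s_1² #I`, since every entry of `U` is a `1 × 1` submatrix.

Hence `W_k ≤ W_1 = s_1` for all `k`, and `Q_k = (s_k - s_{k-1})(2 + s_{k-1} + s_k)/4 ≤ W_k` for
`k ≥ 2`, with `∑ W = ∑ Q = 1`. A vector that dominates another off a coordinate where it is
maximal is majorized by it. The entropy comparison follows by bounding each `-Q_k log Q_k` by the
tangent line of `t ↦ -t log t` at `W_k`, whose slope is at least the slope at `W_1`. -/

open Finset Matrix

lemma Finset.sum_coe_sort_eq_sum_of_notMem {ι M : Type*} [Fintype ι] [AddCommMonoid M]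
    {s : Finset ι} {f : ι → M} (hf : ∀ i ∉ s, f i = 0) : ∑ i : s, f i = ∑ i, f i := by
  rw [sum_coe_sort]
  exact sum_subset (subset_univ s) fun i _ hi => hf i hi

section EuclideanSpace

variable {𝕜 ι : Type*} [RCLike 𝕜] [Fintype ι] {s : Finset ι} {a : EuclideanSpace 𝕜 ι}

lemma EuclideanSpace.sum_coe_sort_norm_sq (ha : ∀ i ∉ s, a i = 0) :
    ∑ i : s, ‖a i‖ ^ 2 = ‖a‖ ^ 2 := by
  rw [EuclideanSpace.norm_sq_eq]
  exact sum_coe_sort_eq_sum_of_notMem (f := fun i => ‖a i‖ ^ 2) fun i hi => by simp [ha i hi]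

lemma EuclideanSpace.exists_card_mul_norm_sq_le (hs : s.Nonempty) (ha : ∀ i ∉ s, a i = 0) :
    ∃ i ∈ s, #s * ‖a i‖ ^ 2 ≤ ‖a‖ ^ 2 := by
  obtain ⟨i, hi, hmin⟩ := exists_min_image s (fun i => ‖a i‖ ^ 2) hs
  refine ⟨i, hi, ?_⟩
  rw [← sum_coe_sort_norm_sq ha, sum_coe_sort s fun i => ‖a i‖ ^ 2]
  simpa using card_nsmul_le_sum s _ _ hmin

end EuclideanSpace

namespace Matrix

variable {d : ℕ} (U : Matrix (Fin d) (Fin d) ℂ)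

lemma inner_toEuclideanCLM_eq_sum (a b : EuclideanSpace ℂ (Fin d)) :
    inner ℂ a (toEuclideanCLM (𝕜 := ℂ) U b) = ∑ i, ∑ j, conj (a i) * U i j * b j := by
  simp only [PiLp.inner_apply, ofLp_toEuclideanCLM, mulVec, dotProduct, RCLike.inner_apply,
    sum_mul]
  exact sum_congr rfl fun i _ => sum_congr rfl fun j _ => by ring

lemma norm_inner_toEuclideanCLM_conjTranspose (a b : EuclideanSpace ℂ (Fin d)) :
    ‖inner ℂ b (toEuclideanCLM (𝕜 := ℂ) Uᴴ a)‖ = ‖inner ℂ a (toEuclideanCLM (𝕜 := ℂ) U b)‖ := by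
  rw [← star_eq_conjTranspose, map_star, ContinuousLinearMap.star_eq_adjoint,
    ContinuousLinearMap.adjoint_inner_right, norm_inner_symm]

variable {U}

lemma conjTranspose_mem_unitaryGroup (hU : U ∈ unitaryGroup (Fin d) ℂ) :
    Uᴴ ∈ unitaryGroup (Fin d) ℂ :=
  star_eq_conjTranspose U ▸ Unitary.star_mem hU

lemma norm_toEuclideanCLM_apply_of_mem_unitaryGroup (hU : U ∈ unitaryGroup (Fin d) ℂ)
    (v : EuclideanSpace ℂ (Fin d)) : ‖toEuclideanCLM (𝕜 := ℂ) U v‖ = ‖v‖ :=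
  ContinuousLinearMap.norm_map_of_mem_unitary (Unitary.map_mem _ hU) v

end Matrix

section SubmatrixNorm

variable {d : ℕ} {U : Matrix (Fin d) (Fin d) ℂ} {I J : Finset (Fin d)}

variable (U I J) in
def supportedPairings : Set ℝ :=
  {r | ∃ a b : EuclideanSpace ℂ (Fin d), (∀ i ∉ I, a i = 0) ∧ (∀ j ∉ J, b j = 0) ∧
    ‖a‖ = 1 ∧ ‖b‖ = 1 ∧ r = ‖inner ℂ a (toEuclideanCLM (𝕜 := ℂ) U b)‖}

lemma sum_coe_sort_bilinear_eq_inner {a b : EuclideanSpace ℂ (Fin d)} (ha : ∀ i ∉ I, a i = 0)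
    (hb : ∀ j ∉ J, b j = 0) :
    ∑ i : I, ∑ j : J, conj (a i) * U i j * b j = inner ℂ a (toEuclideanCLM (𝕜 := ℂ) U b) := by
  rw [inner_toEuclideanCLM_eq_sum, ← sum_coe_sort_eq_sum_of_notMem (s := I)
    (f := fun i => ∑ j, conj (a i) * U i j * b j) fun i hi => by simp [ha i hi]]
  exact sum_congr rfl fun i _ => sum_coe_sort_eq_sum_of_notMem
    (f := fun j => conj (a i) * U i j * b j) fun j hj => by simp [hb j hj]

variable (U I J) in
lemma subOpNorm_eq_sSup_supportedPairings : subOpNorm U I J = sSup (supportedPairings U I J) := by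
  classical
  show sSup _ = sSup _
  congr 1
  ext r
  constructor
  · rintro ⟨x, y, hx, hy, rfl⟩
    let a : EuclideanSpace ℂ (Fin d) := WithLp.toLp 2 fun i => if h : i ∈ I then x ⟨i, h⟩ else 0
    let b : EuclideanSpace ℂ (Fin d) := WithLp.toLp 2 fun j => if h : j ∈ J then y ⟨j, h⟩ else 0
    have ha : ∀ i ∉ I, a i = 0 := fun i hi => dif_neg hi
    have hb : ∀ j ∉ J, b j = 0 := fun j hj => dif_neg hj
    have hxa : x = fun i : I => a i := funext fun i => by simp [a]
    have hyb : y = fun j : J => b j := funext fun j => by simp [b]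
    rw [hxa] at hx ⊢
    rw [hyb] at hy ⊢
    refine ⟨a, b, ha, hb, ?_, ?_, by rw [sum_coe_sort_bilinear_eq_inner ha hb]⟩
    · rw [← pow_eq_one_iff_of_nonneg (norm_nonneg a) two_ne_zero,
        ← EuclideanSpace.sum_coe_sort_norm_sq ha, hx]
    · rw [← pow_eq_one_iff_of_nonneg (norm_nonneg b) two_ne_zero,
        ← EuclideanSpace.sum_coe_sort_norm_sq hb, hy]
  · rintro ⟨a, b, ha, hb, hna, hnb, rfl⟩
    refine ⟨fun i => a i, fun j => b j, ?_, ?_, by rw [sum_coe_sort_bilinear_eq_inner ha hb]⟩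
    · rw [EuclideanSpace.sum_coe_sort_norm_sq ha, hna, one_pow]
    · rw [EuclideanSpace.sum_coe_sort_norm_sq hb, hnb, one_pow]

lemma le_one_of_mem_supportedPairings (hU : U ∈ unitaryGroup (Fin d) ℂ) {r : ℝ}
    (hr : r ∈ supportedPairings U I J) : r ≤ 1 := by
  obtain ⟨a, b, -, -, hna, hnb, rfl⟩ := hr
  calc _ ≤ ‖a‖ * ‖toEuclideanCLM (𝕜 := ℂ) U b‖ := norm_inner_le_norm _ _
    _ = 1 := by rw [norm_toEuclideanCLM_apply_of_mem_unitaryGroup hU, hna, hnb, one_mul]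

lemma subOpNorm_nonneg : 0 ≤ subOpNorm U I J := by
  rw [subOpNorm_eq_sSup_supportedPairings]
  exact Real.sSup_nonneg fun r ⟨_, _, _, _, _, _, hr⟩ => hr ▸ norm_nonneg _

lemma subOpNorm_le_one (hU : U ∈ unitaryGroup (Fin d) ℂ) : subOpNorm U I J ≤ 1 := by
  rw [subOpNorm_eq_sSup_supportedPairings]
  exact Real.sSup_le (fun r hr => le_one_of_mem_supportedPairings hU hr) zero_le_one

lemma subOpNorm_le_of_forall {c : ℝ} (hc : 0 ≤ c)
    (h : ∀ a b : EuclideanSpace ℂ (Fin d), (∀ i ∉ I, a i = 0) → (∀ j ∉ J, b j = 0) →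
      ‖a‖ = 1 → ‖b‖ = 1 → ‖inner ℂ a (toEuclideanCLM (𝕜 := ℂ) U b)‖ ≤ c) :
    subOpNorm U I J ≤ c := by
  rw [subOpNorm_eq_sSup_supportedPairings]
  exact Real.sSup_le (fun r ⟨a, b, ha, hb, hna, hnb, hr⟩ => hr ▸ h a b ha hb hna hnb) hc

lemma norm_inner_le_subOpNorm (hU : U ∈ unitaryGroup (Fin d) ℂ) {a b : EuclideanSpace ℂ (Fin d)}
    (ha : ∀ i ∉ I, a i = 0) (hb : ∀ j ∉ J, b j = 0) :
    ‖inner ℂ a (toEuclideanCLM (𝕜 := ℂ) U b)‖ ≤ subOpNorm U I J * ‖a‖ * ‖b‖ := by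
  rcases eq_or_ne a 0 with rfl | ha0
  · simp
  rcases eq_or_ne b 0 with rfl | hb0
  · simp
  have hna : 0 < ‖a‖ := norm_pos_iff.2 ha0
  have hnb : 0 < ‖b‖ := norm_pos_iff.2 hb0
  have hmem : ‖inner ℂ a (toEuclideanCLM (𝕜 := ℂ) U b)‖ / (‖a‖ * ‖b‖) ∈
      supportedPairings U I J := by
    refine ⟨(‖a‖⁻¹ : ℂ) • a, (‖b‖⁻¹ : ℂ) • b, fun i hi => by simp [ha i hi],
      fun j hj => by simp [hb j hj], ?_, ?_, ?_⟩
    · rw [norm_smul, norm_inv, Complex.norm_real, Real.norm_of_nonneg hna.le,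
        inv_mul_cancel₀ hna.ne']
    · rw [norm_smul, norm_inv, Complex.norm_real, Real.norm_of_nonneg hnb.le,
        inv_mul_cancel₀ hnb.ne']
    · rw [map_smul, inner_smul_left, inner_smul_right, norm_mul, norm_mul, RCLike.norm_conj,
        norm_inv, norm_inv, Complex.norm_real, Complex.norm_real, norm_norm, norm_norm]
      field_simp
  rw [mul_assoc, ← div_le_iff₀ (mul_pos hna hnb), subOpNorm_eq_sSup_supportedPairings]
  exact le_csSup ⟨1, fun r hr => le_one_of_mem_supportedPairings hU hr⟩ hmem

lemma subOpNorm_mono_left (hU : U ∈ unitaryGroup (Fin d) ℂ) {I' : Finset (Fin d)} (hI : I ⊆ I') :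
    subOpNorm U I J ≤ subOpNorm U I' J := by
  refine subOpNorm_le_of_forall subOpNorm_nonneg fun a b ha hb hna hnb => ?_
  simpa [hna, hnb] using norm_inner_le_subOpNorm hU (fun i hi => ha i (mt (@hI i) hi)) hb

variable (U I J) in
lemma subOpNorm_conjTranspose : subOpNorm Uᴴ J I = subOpNorm U I J := by
  simp only [subOpNorm_eq_sSup_supportedPairings]
  congr 1
  ext r
  constructor
  · rintro ⟨a, b, ha, hb, hna, hnb, rfl⟩
    exact ⟨b, a, hb, ha, hnb, hna, norm_inner_toEuclideanCLM_conjTranspose U b a⟩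
  · rintro ⟨a, b, ha, hb, hna, hnb, rfl⟩
    exact ⟨b, a, hb, ha, hnb, hna, (norm_inner_toEuclideanCLM_conjTranspose U a b).symm⟩

lemma norm_apply_le_subOpNorm_singleton (hU : U ∈ unitaryGroup (Fin d) ℂ) (i j : Fin d) :
    ‖U i j‖ ≤ subOpNorm U {i} {j} := by
  have h := norm_inner_le_subOpNorm hU (I := {i}) (J := {j})
    (a := EuclideanSpace.single i 1) (b := EuclideanSpace.single j 1)
    (fun i' hi' => by simp_all) (fun j' hj' => by simp_all)
  simpa [EuclideanSpace.inner_single_left, ofLp_toEuclideanCLM] using h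

lemma one_le_subOpNorm_singleton_univ (hU : U ∈ unitaryGroup (Fin d) ℂ) (i : Fin d) :
    1 ≤ subOpNorm U {i} univ := by
  have hUU : toEuclideanCLM (𝕜 := ℂ) U (toEuclideanCLM (𝕜 := ℂ) Uᴴ (EuclideanSpace.single i 1)) =
      EuclideanSpace.single i 1 := by
    rw [← mul_apply_eq_comp, ← map_mul, ← star_eq_conjTranspose, hU.2, map_one,
      one_apply_eq_self]
  have h := norm_inner_le_subOpNorm hU (I := {i}) (J := univ)
    (a := EuclideanSpace.single i 1) (b := toEuclideanCLM (𝕜 := ℂ) Uᴴ (EuclideanSpace.single i 1))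
    (fun i' hi' => by simp_all) (fun j hj => absurd (mem_univ j) hj)
  simpa [hUU, norm_toEuclideanCLM_apply_of_mem_unitaryGroup (conjTranspose_mem_unitaryGroup hU)]
    using h

end SubmatrixNorm

section Coefficients

variable {d : ℕ} {U : Matrix (Fin d) (Fin d) ℂ} {k : ℕ}

lemma sCoef_le_of_forall {c : ℝ} (hc : 0 ≤ c)
    (h : ∀ I J : Finset (Fin d), I.Nonempty → J.Nonempty → #I + #J = k + 1 → subOpNorm U I J ≤ c) :
    sCoef U k ≤ c :=
  Real.sSup_le (fun _ ⟨I, J, hI, hJ, hk, hr⟩ => hr ▸ h I J hI hJ hk) hc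

lemma subOpNorm_le_sCoef (hU : U ∈ unitaryGroup (Fin d) ℂ) {I J : Finset (Fin d)}
    (hI : I.Nonempty) (hJ : J.Nonempty) (hk : #I + #J = k + 1) : subOpNorm U I J ≤ sCoef U k :=
  le_csSup ⟨1, fun _ ⟨_, _, _, _, _, hr⟩ => hr ▸ subOpNorm_le_one hU⟩ ⟨I, J, hI, hJ, hk, rfl⟩

lemma sCoef_nonneg : 0 ≤ sCoef U k :=
  Real.sSup_nonneg fun _ ⟨_, _, _, _, _, hr⟩ => hr ▸ subOpNorm_nonneg

lemma sCoef_le_one (hU : U ∈ unitaryGroup (Fin d) ℂ) : sCoef U k ≤ 1 :=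
  sCoef_le_of_forall zero_le_one fun _ _ _ _ _ => subOpNorm_le_one hU

lemma norm_apply_le_sCoef_one (hU : U ∈ unitaryGroup (Fin d) ℂ) (i j : Fin d) :
    ‖U i j‖ ≤ sCoef U 1 :=
  (norm_apply_le_subOpNorm_singleton hU i j).trans
    (subOpNorm_le_sCoef hU (singleton_nonempty i) (singleton_nonempty j) rfl)

lemma sCoef_one_pos (hU : U ∈ unitaryGroup (Fin d) ℂ) (hd : d ≠ 0) : 0 < sCoef U 1 := by
  have : Nonempty (Fin d) := ⟨⟨0, Nat.pos_of_ne_zero hd⟩⟩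
  by_contra! h
  have hU0 : U = 0 := ext fun i j => norm_le_zero_iff.1 ((norm_apply_le_sCoef_one hU i j).trans h)
  simpa [hU0] using hU.2

lemma sCoef_self (hU : U ∈ unitaryGroup (Fin d) ℂ) (hd : d ≠ 0) : sCoef U d = 1 := by
  let i : Fin d := ⟨0, Nat.pos_of_ne_zero hd⟩
  refine (sCoef_le_one hU).antisymm ((one_le_subOpNorm_singleton_univ hU i).trans ?_)
  exact subOpNorm_le_sCoef hU (singleton_nonempty i) ⟨i, mem_univ i⟩ (by simp [add_comm])

lemma sCoef_le_sCoef_succ (hU : U ∈ unitaryGroup (Fin d) ℂ) (hk : k + 1 ≤ d) :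
    sCoef U k ≤ sCoef U (k + 1) := by
  refine sCoef_le_of_forall sCoef_nonneg fun I J hI hJ hIJ => ?_
  obtain ⟨i, hi⟩ : ∃ i, i ∉ I := by
    by_contra! h
    have := hJ.card_pos
    rw [eq_univ_of_forall h, card_univ, Fintype.card_fin] at hIJ
    omega
  refine (subOpNorm_mono_left hU (subset_insert i I)).trans
    (subOpNorm_le_sCoef hU (insert_nonempty i I) hJ ?_)
  rw [card_insert_of_notMem hi]
  omega

variable (U k) in
lemma sCoef_conjTranspose : sCoef Uᴴ k = sCoef U k := by
  show sSup _ = sSup _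
  congr 1
  ext r
  constructor
  · rintro ⟨I, J, hI, hJ, hk, rfl⟩
    exact ⟨J, I, hJ, hI, by omega, subOpNorm_conjTranspose U J I⟩
  · rintro ⟨I, J, hI, hJ, hk, rfl⟩
    exact ⟨J, I, hJ, hI, by omega, (subOpNorm_conjTranspose U I J).symm⟩

end Coefficients

section Increment

variable {d : ℕ} {U : Matrix (Fin d) (Fin d) ℂ} {I J : Finset (Fin d)}

lemma norm_sq_toEuclideanCLM_apply_le (hU : U ∈ unitaryGroup (Fin d) ℂ)
    {b : EuclideanSpace ℂ (Fin d)} (hb : ∀ j ∉ J, b j = 0) (i : Fin d) :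
    ‖toEuclideanCLM (𝕜 := ℂ) U b i‖ ^ 2 ≤ sCoef U 1 ^ 2 * #J * ‖b‖ ^ 2 := by
  have hrow : ‖toEuclideanCLM (𝕜 := ℂ) U b i‖ ≤ sCoef U 1 * ∑ j ∈ J, ‖b j‖ :=
    calc ‖toEuclideanCLM (𝕜 := ℂ) U b i‖ = ‖∑ j ∈ J, U i j * b j‖ := by
          rw [ofLp_toEuclideanCLM, mulVec, dotProduct,
            sum_subset (subset_univ J) fun j _ hj => by simp [hb j hj]]
      _ ≤ ∑ j ∈ J, sCoef U 1 * ‖b j‖ := norm_sum_le_of_le _ fun j _ => by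
          rw [norm_mul]
          exact mul_le_mul_of_nonneg_right (norm_apply_le_sCoef_one hU i j) (norm_nonneg _)
      _ = sCoef U 1 * ∑ j ∈ J, ‖b j‖ := (mul_sum _ _ _).symm
  have hcs : (∑ j ∈ J, ‖b j‖) ^ 2 ≤ #J * ‖b‖ ^ 2 := by
    rw [← EuclideanSpace.sum_coe_sort_norm_sq hb, sum_coe_sort J fun j => ‖b j‖ ^ 2]
    exact sq_sum_le_card_mul_sum_sq
  calc ‖toEuclideanCLM (𝕜 := ℂ) U b i‖ ^ 2 ≤ (sCoef U 1 * ∑ j ∈ J, ‖b j‖) ^ 2 :=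
        pow_le_pow_left₀ (norm_nonneg _) hrow 2
    _ ≤ sCoef U 1 ^ 2 * (#J * ‖b‖ ^ 2) := by rw [mul_pow]; gcongr
    _ = sCoef U 1 ^ 2 * #J * ‖b‖ ^ 2 := by ring

lemma subOpNorm_le_sCoef_add_sCoef_one (hU : U ∈ unitaryGroup (Fin d) ℂ) (hI : 2 ≤ #I)
    (hJ : J.Nonempty) (hJI : #J ≤ #I) :
    subOpNorm U I J ≤ sCoef U (#I + #J - 2) + sCoef U 1 := by
  refine subOpNorm_le_of_forall (add_nonneg sCoef_nonneg sCoef_nonneg)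
    fun a b ha hb hna hnb => ?_
  obtain ⟨i, hi, hai⟩ := EuclideanSpace.exists_card_mul_norm_sq_le (card_pos.1 (by omega)) ha
  set v := toEuclideanCLM (𝕜 := ℂ) U b
  set a' := a - EuclideanSpace.single i (a i)
  have ha'_apply : ∀ j, a' j = if j = i then 0 else a j := fun j => by
    by_cases h : j = i <;> simp [a', h]
  have ha' : ∀ j ∉ I.erase i, a' j = 0 := fun j hj => by
    rw [ha'_apply]
    split_ifs with h
    · rfl
    · exact ha j fun hjI => hj (mem_erase.2 ⟨h, hjI⟩)
  have hna' : ‖a'‖ ≤ 1 := by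
    have h : ‖a'‖ ^ 2 ≤ ‖a‖ ^ 2 := by
      rw [EuclideanSpace.norm_sq_eq, EuclideanSpace.norm_sq_eq]
      exact sum_le_sum fun j _ => by rw [ha'_apply]; split_ifs <;> simp
    exact le_of_pow_le_pow_left₀ two_ne_zero zero_le_one (hna ▸ h)
  have hrest : ‖inner ℂ a' v‖ ≤ sCoef U (#I + #J - 2) :=
    calc ‖inner ℂ a' v‖ ≤ subOpNorm U (I.erase i) J * ‖a'‖ * ‖b‖ :=
          norm_inner_le_subOpNorm hU ha' hb
      _ ≤ subOpNorm U (I.erase i) J := by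
          rw [hnb, mul_one]; exact mul_le_of_le_one_right subOpNorm_nonneg hna'
      _ ≤ sCoef U (#I + #J - 2) :=
          subOpNorm_le_sCoef hU (card_pos.1 (by rw [card_erase_of_mem hi]; omega)) hJ
            (by rw [card_erase_of_mem hi]; omega)
  have hpeel : ‖a i‖ * ‖v i‖ ≤ sCoef U 1 := by
    have hv : ‖v i‖ ^ 2 ≤ sCoef U 1 ^ 2 * #J * ‖b‖ ^ 2 := norm_sq_toEuclideanCLM_apply_le hU hb i
    have hJI' : (#J : ℝ) ≤ #I := by exact_mod_cast hJI
    rw [hnb, one_pow, mul_one] at hv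
    rw [hna, one_pow] at hai
    refine le_of_pow_le_pow_left₀ two_ne_zero sCoef_nonneg ?_
    rw [mul_pow]
    nlinarith [mul_le_mul_of_nonneg_left hv (sq_nonneg ‖a i‖),
      mul_le_mul_of_nonneg_left hJI' (mul_nonneg (sq_nonneg ‖a i‖) (sq_nonneg (sCoef U 1))),
      mul_le_mul_of_nonneg_left hai (sq_nonneg (sCoef U 1))]
  calc ‖inner ℂ a v‖ = ‖inner ℂ a' v + conj (a i) * v i‖ := by
        rw [inner_sub_left, EuclideanSpace.inner_single_left, sub_add_cancel]
    _ ≤ ‖inner ℂ a' v‖ + ‖a i‖ * ‖v i‖ := by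
        rw [← RCLike.norm_conj (a i), ← norm_mul]; exact norm_add_le _ _
    _ ≤ _ := add_le_add hrest hpeel

lemma sCoef_succ_le_add_sCoef_one (hU : U ∈ unitaryGroup (Fin d) ℂ) {k : ℕ} (hk : 1 ≤ k) :
    sCoef U (k + 1) ≤ sCoef U k + sCoef U 1 := by
  refine sCoef_le_of_forall (add_nonneg sCoef_nonneg sCoef_nonneg) fun I J hI hJ hIJ => ?_
  rcases le_total #J #I with h | h
  · simpa [show #I + #J - 2 = k by omega] using
      subOpNorm_le_sCoef_add_sCoef_one hU (by omega) hJ h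
  · have := subOpNorm_le_sCoef_add_sCoef_one (conjTranspose_mem_unitaryGroup hU) (by omega) hI h
    rwa [subOpNorm_conjTranspose, sCoef_conjTranspose, sCoef_conjTranspose,
      show #J + #I - 2 = k by omega] at this

end Increment

section Majorization

variable {ι : Type*} [Fintype ι] {x y : ι → ℝ} {i₀ : ι}

lemma sum_sub_le_of_notMem (hsum : ∑ i, x i = ∑ i, y i) (hle : ∀ i ≠ i₀, y i ≤ x i)
    {s : Finset ι} (hs : i₀ ∉ s) : ∑ i ∈ s, (x i - y i) ≤ y i₀ - x i₀ := by
  classical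
  have hrest : ∑ i ∈ univ.erase i₀, (x i - y i) = y i₀ - x i₀ := by
    rw [sum_erase_eq_sub (mem_univ i₀), sum_sub_distrib, hsum]
    ring
  rw [← hrest]
  refine sum_le_sum_of_subset_of_nonneg (fun i hi => mem_erase.2 ⟨?_, mem_univ i⟩)
    fun i hi _ => sub_nonneg.2 (hle i (ne_of_mem_erase hi))
  rintro rfl
  exact hs hi

theorem majorizes_of_le_off_argmax (hsum : ∑ i, x i = ∑ i, y i) (hle : ∀ i ≠ i₀, y i ≤ x i)
    (hmax : ∀ i, x i ≤ x i₀) : Majorizes x y := by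
  classical
  refine ⟨hsum, fun A => ?_⟩
  by_cases hA : i₀ ∈ A
  · refine ⟨A, le_rfl, ?_⟩
    have := sum_sub_le_of_notMem hsum hle (notMem_erase i₀ A)
    rw [← add_sum_erase A _ hA, ← add_sum_erase A _ hA]
    rw [sum_sub_distrib] at this
    linarith
  obtain rfl | ⟨j, hj⟩ := A.eq_empty_or_nonempty
  · exact ⟨∅, le_rfl, le_rfl⟩
  have hjA : i₀ ∉ A.erase j := fun h => hA (mem_of_mem_erase h)
  refine ⟨insert i₀ (A.erase j), ?_, ?_⟩
  · rw [card_insert_of_notMem hjA, card_erase_of_mem hj]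
    have := card_pos.2 ⟨j, hj⟩
    omega
  · have := sum_sub_le_of_notMem hsum hle hA
    have hj₀ : j ≠ i₀ := fun h => hA (h ▸ hj)
    rw [sum_sub_distrib, ← add_sum_erase A x hj, ← add_sum_erase A y hj] at this
    rw [sum_insert hjA, ← add_sum_erase A x hj]
    linarith [hle j hj₀, hmax j]

lemma neg_mul_log_le_tangent {w q : ℝ} (hw : 0 < w) (hq : 0 ≤ q) :
    -(q * Real.log q) ≤ -(w * Real.log w) - (1 + Real.log w) * (q - w) := by
  rcases hq.eq_or_lt with rfl | hq
  · nlinarith [Real.log_le_sub_one_of_pos hw]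
  · have h := Real.log_le_sub_one_of_pos (div_pos hw hq)
    rw [Real.log_div hw.ne' hq.ne', le_sub_iff_add_le, div_eq_mul_inv] at h
    have := mul_le_mul_of_nonneg_left h hq.le
    field_simp at this
    nlinarith

theorem shannonEntropy_le_of_le_off_argmax (hsum : ∑ i, x i = ∑ i, y i)
    (hle : ∀ i ≠ i₀, y i ≤ x i) (hmax : ∀ i, x i ≤ x i₀) (hpos : 0 < x i₀)
    (hy : ∀ i, 0 ≤ y i) : shannonEntropy y ≤ shannonEntropy x := by
  set c := -(1 + Real.log (x i₀))
  have hterm : ∀ i, -(y i * Real.log (y i)) ≤ -(x i * Real.log (x i)) + c * (y i - x i) := by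
    intro i
    by_cases hi : i = i₀
    · subst hi
      linarith [neg_mul_log_le_tangent hpos (hy i)]
    rcases (hy i |>.trans (hle i hi)).eq_or_lt with hx | hx
    · rw [← hx, (hy i).antisymm' (hx ▸ hle i hi)]
      simp
    have hslope : -(1 + Real.log (x i)) * (y i - x i) ≤ c * (y i - x i) :=
      mul_le_mul_of_nonpos_right (by linarith [Real.log_le_log hx (hmax i)])
        (sub_nonpos.2 (hle i hi))
    linarith [neg_mul_log_le_tangent hx (hy i)]
  have hc : ∑ i, c * (y i - x i) = 0 := by rw [← mul_sum, sum_sub_distrib, hsum, sub_self, mul_zero]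
  unfold shannonEntropy
  rw [neg_le_neg_iff]
  have := sum_le_sum fun i (_ : i ∈ univ) => hterm i
  rw [sum_add_distrib, hc, add_zero, sum_neg_distrib, sum_neg_distrib] at this
  linarith

end Majorization

lemma sum_fin_sub_ite_eq (f : ℕ → ℝ) {d : ℕ} (hd : d ≠ 0) :
    ∑ i : Fin d, (f (i + 1) - if (i : ℕ) = 0 then 0 else f i) = f d := by
  rw [Fin.sum_univ_eq_sum_range (fun i => f (i + 1) - if i = 0 then 0 else f i)]
  simpa [hd] using sum_range_sub (fun n => if n = 0 then 0 else f n) d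

lemma half_one_add_sq_sub_mem_Icc {s t : ℝ} (hs : 0 ≤ s) (hst : s ≤ t) (ht : t ≤ 1) :
    ((1 + t) / 2) ^ 2 - ((1 + s) / 2) ^ 2 ∈ Set.Icc 0 (t - s) :=
  ⟨by nlinarith, by nlinarith⟩

section Wvec

variable {d : ℕ} [NeZero d] {U : Matrix (Fin d) (Fin d) ℂ}

lemma Wvec_zero : Wvec U 0 = sCoef U 1 := by simp [Wvec]

lemma Wvec_of_ne_zero {k : Fin d} (hk : k ≠ 0) : Wvec U k = sCoef U (k + 1) - sCoef U k := by
  simp [Wvec, Fin.val_ne_zero_iff.2 hk]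

lemma sum_Wvec (hU : U ∈ unitaryGroup (Fin d) ℂ) : ∑ k, Wvec U k = 1 :=
  (sum_fin_sub_ite_eq (sCoef U) (NeZero.ne d)).trans (sCoef_self hU (NeZero.ne d))

lemma Wvec_le_Wvec_zero (hU : U ∈ unitaryGroup (Fin d) ℂ) (k : Fin d) : Wvec U k ≤ Wvec U 0 := by
  rcases eq_or_ne k 0 with rfl | hk
  · rfl
  rw [Wvec_of_ne_zero hk, Wvec_zero]
  linarith [sCoef_succ_le_add_sCoef_one hU (Nat.one_le_iff_ne_zero.2 (Fin.val_ne_zero_iff.2 hk))]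

end Wvec

/-- For any unitary `U`, the vector `W = (s₁, s₂ - s₁, …, s_d - s_{d-1})` is majorized
by `Q^{(d-1)} = (R₁, R₂ - R₁, …, R_d - R_{d-1})` with `R_i = ((1 + s_i)/2)²`.
Consequently the direct-sum majorization bound `B_Maj2 = H(W)` is never weaker than the
tensor-product majorization bound `B_Maj1 = H(Q^{(d-1)})`. -/
theorem stmt_12 (d : ℕ) (hd : 2 ≤ d)
    (U : Matrix (Fin d) (Fin d) ℂ) (hU : U ∈ Matrix.unitaryGroup (Fin d) ℂ)
    (R : ℕ → ℝ) (hR : ∀ k, R k = ((1 + sCoef U k) / 2) ^ 2)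
    (Qd : Fin d → ℝ)
    (hQd : ∀ i : Fin d, Qd i = R (i.val + 1) - (if i.val = 0 then 0 else R i.val)) :
    Majorizes (Wvec U) Qd ∧ shannonEntropy Qd ≤ shannonEntropy (Wvec U) := by
  have hd0 : d ≠ 0 := by omega
  have : NeZero d := ⟨hd0⟩
  have hsum : ∑ k, Wvec U k = ∑ k, Qd k := by
    rw [sum_Wvec hU, sum_congr rfl fun k _ => hQd k, sum_fin_sub_ite_eq R hd0, hR,
      sCoef_self hU hd0]
    norm_num
  have hQ : ∀ k ≠ 0, Qd k ∈ Set.Icc 0 (Wvec U k) := fun k hk => by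
    rw [hQd, if_neg (Fin.val_ne_zero_iff.2 hk), hR, hR, Wvec_of_ne_zero hk]
    exact half_one_add_sq_sub_mem_Icc sCoef_nonneg (sCoef_le_sCoef_succ hU k.2) (sCoef_le_one hU)
  have hQ_nonneg : ∀ k, 0 ≤ Qd k := fun k => by
    rcases eq_or_ne k 0 with rfl | hk
    · simp [hQd, hR, sq_nonneg]
    · exact (hQ k hk).1
  have hle : ∀ k ≠ 0, Qd k ≤ Wvec U k := fun k hk => (hQ k hk).2
  exact ⟨majorizes_of_le_off_argmax hsum hle (Wvec_le_Wvec_zero hU),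
    shannonEntropy_le_of_le_off_argmax hsum hle (Wvec_le_Wvec_zero hU)
      (Wvec_zero (U := U) ▸ sCoef_one_pos hU hd0) hQ_nonneg⟩
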